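/- arXiv:1010.3339 — 2 statements merged into one kernel-verified Lean document; each statement's English description precedes it below -/
import Mathlib

section
/- Let z ↦ (a z, k z) be a contact element net (a map from ℤ² to contact elements) such that for all neighbouring indices z, z' one has a z ≠ a z' and k z ≠ k z'. Then (a, k) is a principal contact element net (any two neighbouring contact elements have a common oriented tangent sphere) if and only if for all neighbouring indices z, z' there exist two distinct rotations R and R' each mapping (a z, k z) to (a z', k z'), i.e. R (a z) = a z', R_lin (k z) = k z', R' (a z) = a z', R'_lin (k z) = k z', R ≠ R'. Moreover, in this case infinitely many such rotations exist. -/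
noncomputable section
local notation "⟪" x ", " y "⟫" => @inner ℝ _ _ x y

abbrev E3 : Type := EuclideanSpace ℝ (Fin 3)

/-- Cross product on `E3`. -/
def cross3 (a b : E3) : E3 :=
  WithLp.toLp 2 ![a 1 * b 2 - a 2 * b 1, a 2 * b 0 - a 0 * b 2, a 0 * b 1 - a 1 * b 0]

/-- The line through `a` with direction `v`. -/
def line (a v : E3) : Set E3 := {x | ∃ t : ℝ, x = a + t • v}

/-- Two contact elements have a common oriented tangent sphere. -/
def CommonTangentSphere (p n p' n' : E3) : Prop :=
  ∃ r : ℝ, p + r • n = p' + r • n'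

/-- Neighbouring indices in `ℤ²`. -/
def Neighbor (z z' : ℤ × ℤ) : Prop :=
  z' = z + (1, 0) ∨ z' = z + (0, 1) ∨ z = z' + (1, 0) ∨ z = z' + (0, 1)

/-- Principal contact element net. -/
def IsPCEN (p n : ℤ × ℤ → E3) : Prop :=
  (∀ z, ‖n z‖ = 1) ∧
  ∀ z z', Neighbor z z' → CommonTangentSphere (p z) (n z) (p z') (n z')

/-- Bäcklund mates with distance `d` and angle `φ`. -/
def BacklundMates (p n q m : ℤ × ℤ → E3) (d φ : ℝ) : Prop :=
  IsPCEN p n ∧ IsPCEN q m ∧ 0 < d ∧ Real.sin φ ≠ 0 ∧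
  ∀ z, ‖q z - p z‖ = d ∧ ⟪n z, m z⟫ = Real.cos φ ∧
    ⟪cross3 (n z) (m z), q z - p z⟫ = d * Real.sin φ ∧
    ⟪q z - p z, n z⟫ = 0 ∧ ⟪q z - p z, m z⟫ = 0

/-- The values of a net on the elementary quadrilateral at `z`. -/
def quadAt (p : ℤ × ℤ → E3) (z : ℤ × ℤ) : Fin 4 → E3 :=
  ![p z, p (z + (1, 0)), p (z + (1, 1)), p (z + (0, 1))]

/-- The vector area of a (spatial) quadrilateral. -/
def vectorArea (v : Fin 4 → E3) : E3 :=
  (1 / 2 : ℝ) • (cross3 (v 0) (v 1) + cross3 (v 1) (v 2) +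
    cross3 (v 2) (v 3) + cross3 (v 3) (v 0))

/-- Two lines (given by point and direction) are skew. -/
def SkewLines (a u b v : E3) : Prop := ⟪b - a, cross3 u v⟫ ≠ 0

/-- The twist of two skew oriented lines. -/
def twist (a u b v : E3) : ℝ := ‖cross3 u v‖ ^ 2 / ⟪b - a, cross3 u v⟫

/-- `R` is a rotation of `E3`: an orientation-preserving isometry, different from
the identity, whose fixed-point set contains a line. -/
def IsRotation (R : E3 ≃ᵃⁱ[ℝ] E3) : Prop :=
  0 < LinearMap.det R.linearIsometryEquiv.toLinearEquiv.toLinearMap ∧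
  R ≠ AffineIsometryEquiv.refl ℝ E3 ∧
  ∃ a v : E3, v ≠ 0 ∧ ∀ x ∈ line a v, R x = x

/-- `R` is a rotation about the line through `a` with direction `v`:
its fixed-point set is exactly that line. -/
def IsRotationAbout (R : E3 ≃ᵃⁱ[ℝ] E3) (a v : E3) : Prop :=
  v ≠ 0 ∧
  0 < LinearMap.det R.linearIsometryEquiv.toLinearEquiv.toLinearMap ∧
  R ≠ AffineIsometryEquiv.refl ℝ E3 ∧
  ∀ x : E3, R x = x ↔ x ∈ line a v

/-!
If `p + r • n = p' + r • n'`, reflect first in the bisector plane of `n` and `n'`, then in any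
plane containing `n'`, both planes passing through the sphere centre `p + r • n`: the product is a
rotation about the line where the two planes meet and carries `(p, n)` to `(p', n')`. The second
plane can be chosen in infinitely many ways.

Conversely, every fixed point `x` of an isometry carrying `(p, n)` to `(p', n')` satisfies
`‖x - p‖ = ‖x - p'‖` and `⟪x - p, n⟫ = ⟪x - p', n'⟫`, two affine equations with normals
`n - n'` and `p' - p`. Without a common tangent sphere these normals are independent, so the
equations cut out a line in `ℝ³`, which is then the axis of every such rotation. Two
orientation-preserving isometries that agree on a line and on the point `p` off it are equal.
-/

open Module Submodule Set

section InnerProductSpace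

variable {V : Type*} [NormedAddCommGroup V] [InnerProductSpace ℝ V]

theorem LinearMap.ext_of_eqOn_of_eqOn_orthogonal {W : Type*} [AddCommGroup W] [Module ℝ W]
    (K : Submodule ℝ V) [K.HasOrthogonalProjection] {f g : V →ₗ[ℝ] W}
    (hK : EqOn f g K) (hKo : EqOn f g Kᗮ) : f = g :=
  LinearMap.ext_on (s := K ∪ Kᗮ)
    (by rw [span_union, span_eq, span_eq, sup_orthogonal_of_hasOrthogonalProjection])
    (hK.union hKo)

theorem det_reflection_orthogonal_singleton [FiniteDimensional ℝ V] {u : V} (hu : u ≠ 0) :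
    LinearMap.det (reflection (ℝ ∙ u)ᗮ).toLinearEquiv.toLinearMap = -1 := by
  rw [det_reflection, orthogonal_orthogonal, finrank_span_singleton hu, pow_one]

theorem LinearIsometryEquiv.eq_refl_of_fixes_of_finrank_orthogonal_eq_one [FiniteDimensional ℝ V]
    (S : V ≃ₗᵢ[ℝ] V) {K : Submodule ℝ V} (hK : finrank ℝ Kᗮ = 1)
    (hdet : 0 < LinearMap.det S.toLinearEquiv.toLinearMap) (hS : ∀ x ∈ K, S x = x) :
    S = LinearIsometryEquiv.refl ℝ V := by
  obtain ⟨w, hw⟩ := Module.finrank_pos_iff_exists_ne_zero.mp (hK ▸ zero_lt_one : 0 < finrank ℝ Kᗮ)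
  have hSw : S w ∈ Kᗮ := fun x hx => by
    rw [← hS x hx, S.inner_map_map]; exact w.2 x hx
  -- `S` preserves the line `Kᗮ`, acting on it by some `t = ±1`; for `t = -1`, `S = K.reflection`.
  obtain ⟨t, ht⟩ := (finrank_eq_one_iff_of_nonzero' w hw).mp hK ⟨S w, hSw⟩
  replace ht : S w = t • (w : V) := by simpa using congr(($ht : V)).symm
  have hSo : ∀ y ∈ Kᗮ, S y = t • y := fun y hy => by
    obtain ⟨c, hc⟩ := (finrank_eq_one_iff_of_nonzero' w hw).mp hK ⟨y, hy⟩
    have hy' : y = c • (w : V) := by simpa using congr(($hc : V)).symm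
    rw [hy', map_smul, ht, smul_comm]
  have ht1 : |t| = 1 := by
    have := S.norm_map w
    rw [ht, norm_smul, Real.norm_eq_abs] at this
    exact (mul_eq_right₀ (by simpa using hw)).mp this
  rcases abs_eq (zero_le_one' ℝ) |>.mp ht1 with rfl | rfl
  · refine LinearIsometryEquiv.toLinearEquiv_injective <| LinearEquiv.toLinearMap_injective <|
      LinearMap.ext_of_eqOn_of_eqOn_orthogonal K (fun x hx => hS x hx) fun y hy => ?_
    simp [hSo y hy]
  · have hrefl : S.toLinearEquiv.toLinearMap = K.reflection.toLinearEquiv.toLinearMap :=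
      LinearMap.ext_of_eqOn_of_eqOn_orthogonal K
        (fun x hx => by simp [hS x hx, reflection_mem_subspace_eq_self hx])
        fun y hy => by
          simp [hSo y hy, reflection_mem_subspace_orthogonalComplement_eq_neg hy]
    rw [hrefl, det_reflection, hK] at hdet
    norm_num at hdet

theorem LinearIsometryEquiv.eq_of_eqOn_of_finrank_orthogonal_eq_one [FiniteDimensional ℝ V]
    {Q Q' : V ≃ₗᵢ[ℝ] V} {K : Submodule ℝ V} (hK : finrank ℝ Kᗮ = 1)
    (hQ : 0 < LinearMap.det Q.toLinearEquiv.toLinearMap)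
    (hQ' : 0 < LinearMap.det Q'.toLinearEquiv.toLinearMap) (h : ∀ x ∈ K, Q x = Q' x) :
    Q = Q' := by
  have hQ'symm : 0 < LinearMap.det Q'.symm.toLinearEquiv.toLinearMap :=
    (pos_iff_pos_of_mul_pos (LinearEquiv.det_symm_mul_det Q'.toLinearEquiv ▸ one_pos)).mpr hQ'
  have hS := (Q.trans Q'.symm).eq_refl_of_fixes_of_finrank_orthogonal_eq_one hK
    (by rw [show (Q.trans Q'.symm).toLinearEquiv.toLinearMap =
        Q'.symm.toLinearEquiv.toLinearMap ∘ₗ Q.toLinearEquiv.toLinearMap from rfl,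
        LinearMap.det_comp]; positivity)
    fun x hx => by simp [h x hx]
  ext x
  simpa using congr(Q' ($hS x))

theorem AffineIsometryEquiv.eq_of_eqOn_of_finrank_orthogonal_eq_one {P : Type*} [MetricSpace P]
    [NormedAddTorsor V P] [FiniteDimensional ℝ V] {R R' : P ≃ᵃⁱ[ℝ] P} {K : Submodule ℝ V}
    (hK : finrank ℝ Kᗮ = 1)
    (hR : 0 < LinearMap.det R.linearIsometryEquiv.toLinearEquiv.toLinearMap)
    (hR' : 0 < LinearMap.det R'.linearIsometryEquiv.toLinearEquiv.toLinearMap) {a : P}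
    (ha : R a = R' a) (h : ∀ x ∈ K, R.linearIsometryEquiv x = R'.linearIsometryEquiv x) :
    R = R' := by
  have hlin := LinearIsometryEquiv.eq_of_eqOn_of_finrank_orthogonal_eq_one hK hR hR' h
  ext x
  rw [← vsub_vadd x a, map_vadd, map_vadd, hlin, ha]

def IsEquicenter (p n p' n' x : V) : Prop :=
  ‖x - p‖ = ‖x - p'‖ ∧ ⟪x - p, n⟫ = ⟪x - p', n'⟫

theorem AffineIsometryEquiv.isEquicenter_of_map_eq_self {R : V ≃ᵃⁱ[ℝ] V} {p n p' n' x : V}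
    (hp : R p = p') (hn : R.linearIsometryEquiv n = n') (hx : R x = x) :
    IsEquicenter p n p' n' x := by
  have h : R.linearIsometryEquiv (x - p) = x - p' := by simpa [hx, hp] using R.map_vsub x p
  exact ⟨by rw [← h, LinearIsometryEquiv.norm_map],
    by rw [← h, ← hn, LinearIsometryEquiv.inner_map_map]⟩

theorem IsEquicenter.sub_mem_orthogonal {p n p' n' x y : V} (hx : IsEquicenter p n p' n' x)
    (hy : IsEquicenter p n p' n' y) : x - y ∈ (span ℝ (range ![n - n', p' - p]))ᗮ := by
  refine isOrtho_iff_le.mp (isOrtho_span.mpr ?_) (mem_span_singleton_self (x - y))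
  simp only [mem_singleton_iff, forall_eq, forall_mem_range, Fin.forall_fin_two]
  have hxn := congrArg (· ^ 2) hx.1
  have hyn := congrArg (· ^ 2) hy.1
  simp only [norm_sub_sq_real] at hxn hyn
  have hxi := hx.2
  have hyi := hy.2
  simp only [inner_sub_left, inner_sub_right, Matrix.cons_val_zero, Matrix.cons_val_one]
    at hxi hyi ⊢
  constructor <;> linarith

theorem exists_ne_zero_inner_eq_zero_inner_eq_zero [FiniteDimensional ℝ V]
    (hV : 2 < finrank ℝ V) (u w : V) : ∃ v ≠ 0, ⟪u, v⟫ = 0 ∧ ⟪w, v⟫ = 0 := by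
  set K := span ℝ (range ![u, w])
  have hK : finrank ℝ K ≤ 2 := (finrank_range_le_card _).trans (by simp)
  have := K.finrank_add_finrank_orthogonal
  obtain ⟨v, hv⟩ := Module.finrank_pos_iff_exists_ne_zero.mp (by omega : 0 < finrank ℝ Kᗮ)
  exact ⟨v, by simpa using hv, inner_right_of_mem_orthogonal (subset_span (mem_range_self 0)) v.2,
    inner_right_of_mem_orthogonal (subset_span (mem_range_self 1)) v.2⟩

theorem exists_linearIndependent_pair_inner_eq_zero [FiniteDimensional ℝ V]
    (hV : 2 < finrank ℝ V) (n : V) :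
    ∃ q₁ q₂ : V, LinearIndependent ℝ ![q₁, q₂] ∧ ⟪n, q₁⟫ = 0 ∧ ⟪n, q₂⟫ = 0 := by
  obtain ⟨q₁, hq₁, hnq₁, -⟩ := exists_ne_zero_inner_eq_zero_inner_eq_zero hV n n
  obtain ⟨q₂, hq₂, hnq₂, hq₁q₂⟩ := exists_ne_zero_inner_eq_zero_inner_eq_zero hV n q₁
  refine ⟨q₁, q₂, linearIndependent_of_ne_zero_of_inner_eq_zero ?_ ?_, hnq₁, hnq₂⟩
  · simp [Fin.forall_fin_two, hq₁, hq₂]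
  · intro i j hij
    fin_cases i <;> fin_cases j <;> simp_all [real_inner_comm]

theorem finrank_orthogonal_span_pair [FiniteDimensional ℝ V] (hV : finrank ℝ V = 3) {u v : V}
    (h : LinearIndependent ℝ ![u, v]) : finrank ℝ (span ℝ (range ![u, v]))ᗮ = 1 := by
  have := (span ℝ (range ![u, v])).finrank_add_finrank_orthogonal
  rw [finrank_span_eq_card h, hV, Fintype.card_fin] at this
  omega

theorem LinearIndependent.injective_span_singleton_add_smul {q₁ q₂ : V}
    (h : LinearIndependent ℝ ![q₁, q₂]) : Function.Injective fun t : ℝ => ℝ ∙ (q₁ + t • q₂) := by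
  intro s t hst
  have hs : q₁ + s • q₂ ∈ ℝ ∙ (q₁ + t • q₂) := by
    simpa only [← hst] using mem_span_singleton_self (q₁ + s • q₂)
  obtain ⟨c, hc⟩ := mem_span_singleton.mp hs
  obtain ⟨hc1, hcts⟩ := LinearIndependent.pair_iff.mp h (c - 1) (c * t - s)
    (by rw [← sub_eq_zero] at hc; rw [← hc]; module)
  have : c = 1 := by linarith
  subst this
  linarith

theorem Submodule.eq_of_reflection_eq {K L : Submodule ℝ V} [K.HasOrthogonalProjection]
    [L.HasOrthogonalProjection] (h : K.reflection = L.reflection) : K = L := by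
  ext x
  rw [← reflection_eq_self_iff, h, reflection_eq_self_iff]

def LinearIsometryEquiv.centeredAt (Q : V ≃ₗᵢ[ℝ] V) (c : V) : V ≃ᵃⁱ[ℝ] V :=
  AffineIsometryEquiv.mk' (fun x => Q (x - c) + c) Q c fun x => by simp

@[simp]
theorem LinearIsometryEquiv.centeredAt_apply (Q : V ≃ₗᵢ[ℝ] V) (c x : V) :
    Q.centeredAt c x = Q (x - c) + c := rfl

@[simp]
theorem LinearIsometryEquiv.linearIsometryEquiv_centeredAt (Q : V ≃ₗᵢ[ℝ] V) (c : V) :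
    (Q.centeredAt c).linearIsometryEquiv = Q :=
  AffineIsometryEquiv.linearIsometryEquiv_mk' _ _ _ _

theorem LinearIsometryEquiv.centeredAt_apply_of_add_smul_eq {Q : V ≃ₗᵢ[ℝ] V} {p n p' n' : V}
    {r : ℝ} (hr : p + r • n = p' + r • n') (hQ : Q n = n') : Q.centeredAt (p + r • n) p = p' := by
  rw [centeredAt_apply, show p - (p + r • n) = -(r • n) by abel, map_neg, map_smul, hQ, hr]
  abel

theorem reflection_trans_reflection_apply_of_norm_eq {n n' w : V} (hnorm : ‖n‖ = ‖n'‖)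
    (hw : ⟪w, n'⟫ = 0) : (reflection (ℝ ∙ (n - n'))ᗮ).trans (reflection (ℝ ∙ w)ᗮ) n = n' := by
  simp [reflection_sub hnorm,
    reflection_mem_subspace_eq_self (mem_orthogonal_singleton_iff_inner_right.mpr hw)]

end InnerProductSpace

theorem finrank_E3 : finrank ℝ E3 = 3 := finrank_euclideanSpace_fin

theorem isRotation_centeredAt_reflection_trans_reflection (c : E3) {u w : E3} (hu : u ≠ 0)
    (hw : w ≠ 0)
    (hne : (reflection (ℝ ∙ u)ᗮ).trans (reflection (ℝ ∙ w)ᗮ) ≠ LinearIsometryEquiv.refl ℝ E3) :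
    IsRotation (((reflection (ℝ ∙ u)ᗮ).trans (reflection (ℝ ∙ w)ᗮ)).centeredAt c) := by
  obtain ⟨v, hv, hvu, hvw⟩ :=
    exists_ne_zero_inner_eq_zero_inner_eq_zero (by rw [finrank_E3]; norm_num) u w
  refine ⟨?_, fun h => hne ?_, c, v, hv, ?_⟩
  · rw [LinearIsometryEquiv.linearIsometryEquiv_centeredAt,
      show ((reflection (ℝ ∙ u)ᗮ).trans (reflection (ℝ ∙ w)ᗮ)).toLinearEquiv.toLinearMap =
        (reflection (ℝ ∙ w)ᗮ).toLinearEquiv.toLinearMap ∘ₗ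
          (reflection (ℝ ∙ u)ᗮ).toLinearEquiv.toLinearMap from rfl,
      LinearMap.det_comp, det_reflection_orthogonal_singleton hu,
      det_reflection_orthogonal_singleton hw]
    norm_num
  · have h' := congr(($h).linearIsometryEquiv)
    rw [LinearIsometryEquiv.linearIsometryEquiv_centeredAt] at h'
    exact h'.trans (LinearIsometryEquiv.ext fun _ => rfl)
  · rintro _ ⟨t, rfl⟩
    simp [reflection_mem_subspace_eq_self, mem_orthogonal_singleton_iff_inner_right, hvu, hvw,
      add_comm]

theorem setOf_isRotation_infinite_of_commonTangentSphere {p n p' n' : E3} (hnorm : ‖n‖ = ‖n'‖)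
    (hnn : n ≠ n') (h : CommonTangentSphere p n p' n') :
    {R : E3 ≃ᵃⁱ[ℝ] E3 | IsRotation R ∧ R p = p' ∧ R.linearIsometryEquiv n = n'}.Infinite := by
  obtain ⟨r, hr⟩ := h
  obtain ⟨q₁, q₂, hq, hq₁, hq₂⟩ :=
    exists_linearIndependent_pair_inner_eq_zero (by rw [finrank_E3]; norm_num) n'
  set Q : ℝ → E3 ≃ₗᵢ[ℝ] E3 := fun t =>
    (reflection (ℝ ∙ (n - n'))ᗮ).trans (reflection (ℝ ∙ (q₁ + t • q₂))ᗮ)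
  have hQ : ∀ t, Q t n = n' := fun t => reflection_trans_reflection_apply_of_norm_eq hnorm
    (by rw [real_inner_comm]; simp [inner_add_right, real_inner_smul_right, hq₁, hq₂])
  have hw : ∀ t, q₁ + t • q₂ ≠ 0 := fun t h =>
    one_ne_zero (LinearIndependent.pair_iff.mp hq 1 t (by simpa using h)).1
  refine Set.infinite_of_injective_forall_mem (f := fun t => (Q t).centeredAt (p + r • n))
    (fun s t hst => hq.injective_span_singleton_add_smul ?_) fun t =>
      ⟨isRotation_centeredAt_reflection_trans_reflection _ (sub_ne_zero.mpr hnn) (hw t)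
        fun h => hnn ((congr($h n)).symm.trans (hQ t)),
      LinearIsometryEquiv.centeredAt_apply_of_add_smul_eq hr (hQ t), by simpa using hQ t⟩
  have hQst : Q s = Q t := by simpa using congr(($hst).linearIsometryEquiv)
  show ℝ ∙ (q₁ + s • q₂) = ℝ ∙ (q₁ + t • q₂)
  rw [← orthogonal_orthogonal (ℝ ∙ (q₁ + s • q₂)), ← orthogonal_orthogonal (ℝ ∙ (q₁ + t • q₂))]
  refine congrArg (fun K : Submodule ℝ E3 => Kᗮ) (Submodule.eq_of_reflection_eq ?_)
  refine LinearIsometryEquiv.ext fun x => ?_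
  simpa [Q] using congr($hQst (reflection (ℝ ∙ (n - n'))ᗮ x))

theorem IsRotation.map_eq_self_of_isEquicenter {R : E3 ≃ᵃⁱ[ℝ] E3} (hR : IsRotation R)
    {p n p' n' x : E3} (hp : R p = p') (hn : R.linearIsometryEquiv n = n')
    (hind : LinearIndependent ℝ ![n - n', p' - p]) (hx : IsEquicenter p n p' n' x) : R x = x := by
  obtain ⟨-, -, a, v, hv, hfix⟩ := hR
  have ha := R.isEquicenter_of_map_eq_self hp hn (hfix a ⟨0, by simp⟩)
  have hav := R.isEquicenter_of_map_eq_self hp hn (hfix (a + v) ⟨1, by simp⟩)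
  have hvW := hav.sub_mem_orthogonal ha
  rw [add_sub_cancel_left] at hvW
  obtain ⟨c, hc⟩ := (finrank_eq_one_iff_of_nonzero' ⟨v, hvW⟩ (by simpa using hv)).mp
    (finrank_orthogonal_span_pair finrank_E3 hind) ⟨x - a, hx.sub_mem_orthogonal ha⟩
  refine hfix x ⟨c, ?_⟩
  rw [← sub_eq_iff_eq_add']
  simpa using congr(($hc : E3)).symm

theorem IsRotation.eq_of_linearIndependent {R R' : E3 ≃ᵃⁱ[ℝ] E3} (hR : IsRotation R)
    (hR' : IsRotation R') {p n p' n' : E3} (hpp : p ≠ p')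
    (hind : LinearIndependent ℝ ![n - n', p' - p]) (hp : R p = p')
    (hn : R.linearIsometryEquiv n = n') (hp' : R' p = p') (hn' : R'.linearIsometryEquiv n = n') :
    R = R' := by
  obtain ⟨hdet, -, a, v, hv, hfix⟩ := hR
  have hfix' : ∀ x, R x = x → R' x = x := fun x hx =>
    hR'.map_eq_self_of_isEquicenter hp' hn' hind (R.isEquicenter_of_map_eq_self hp hn hx)
  have ha : R a = a := hfix a ⟨0, by simp⟩
  have hav : R (a + v) = a + v := hfix _ ⟨1, by simp⟩
  have hlin : ∀ F : E3 ≃ᵃⁱ[ℝ] E3, F a = a → F (a + v) = a + v → F p = p' →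
      F.linearIsometryEquiv v = v ∧ F.linearIsometryEquiv (p - a) = p' - a := fun F h₁ h₂ h₃ =>
    ⟨by simpa [h₁, h₂] using F.map_vsub (a + v) a, by simpa [h₁, h₃] using F.map_vsub p a⟩
  have hvp : LinearIndependent ℝ ![v, p - a] := (LinearIndependent.pair_iff' hv).mpr fun c hc =>
    hpp (by rw [← hp, hfix p ⟨c, by rw [hc]; abel⟩])
  refine AffineIsometryEquiv.eq_of_eqOn_of_finrank_orthogonal_eq_one
    (finrank_orthogonal_span_pair finrank_E3 hvp) hdet hR'.1 (ha.trans (hfix' a ha).symm)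
    fun x hx => LinearMap.eqOn_span' (f := R.linearIsometryEquiv.toLinearEquiv.toLinearMap)
      (g := R'.linearIsometryEquiv.toLinearEquiv.toLinearMap) ?_ hx
  obtain ⟨hRv, hRp⟩ := hlin R ha hav hp
  obtain ⟨hR'v, hR'p⟩ := hlin R' (hfix' a ha) (hfix' _ hav) hp'
  rintro _ ⟨i, rfl⟩
  fin_cases i
  exacts [hRv.trans hR'v.symm, hRp.trans hR'p.symm]

theorem commonTangentSphere_of_not_linearIndependent {p n p' n' : E3} (hnn : n ≠ n')
    (h : ¬LinearIndependent ℝ ![n - n', p' - p]) : CommonTangentSphere p n p' n' := by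
  obtain ⟨r, hr⟩ := by simpa [LinearIndependent.pair_iff' (sub_ne_zero.mpr hnn)] using h
  exact ⟨r, by rw [← sub_eq_zero] at hr ⊢; rw [← hr]; module⟩

theorem commonTangentSphere_of_isRotation_of_ne {p n p' n' : E3} (hpp : p ≠ p') (hnn : n ≠ n')
    {R R' : E3 ≃ᵃⁱ[ℝ] E3} (hR : IsRotation R) (hR' : IsRotation R') (hne : R ≠ R')
    (hp : R p = p') (hn : R.linearIsometryEquiv n = n') (hp' : R' p = p')
    (hn' : R'.linearIsometryEquiv n = n') : CommonTangentSphere p n p' n' :=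
  by_contra fun h => hne <| hR.eq_of_linearIndependent hR' hpp
    (not_not.mp (mt (commonTangentSphere_of_not_linearIndependent hnn) h)) hp hn hp' hn'

/-- **Proposition.** A contact element net `(a, k)` (with neighbouring points and
normals distinct) is a principal contact element net if and only if any two
neighbouring contact elements correspond in two distinct rotations; in this case
infinitely many such rotations exist. -/
theorem pcen_iff_two_rotations
    (a k : ℤ × ℤ → E3)
    (hk : ∀ z, ‖k z‖ = 1)
    (ha : ∀ z z', Neighbor z z' → a z ≠ a z')
    (hkk : ∀ z z', Neighbor z z' → k z ≠ k z') :
    ((∀ z z', Neighbor z z' →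
        CommonTangentSphere (a z) (k z) (a z') (k z')) ↔
      (∀ z z', Neighbor z z' →
        ∃ R R' : E3 ≃ᵃⁱ[ℝ] E3, IsRotation R ∧ IsRotation R' ∧ R ≠ R' ∧
          R (a z) = a z' ∧ R.linearIsometryEquiv (k z) = k z' ∧
          R' (a z) = a z' ∧ R'.linearIsometryEquiv (k z) = k z')) ∧
    ((∀ z z', Neighbor z z' →
        CommonTangentSphere (a z) (k z) (a z') (k z')) →
      ∀ z z', Neighbor z z' →
        {R : E3 ≃ᵃⁱ[ℝ] E3 | IsRotation R ∧ R (a z) = a z' ∧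
          R.linearIsometryEquiv (k z) = k z'}.Infinite) := by
  have hinf : ∀ z z', Neighbor z z' → CommonTangentSphere (a z) (k z) (a z') (k z') →
      {R : E3 ≃ᵃⁱ[ℝ] E3 | IsRotation R ∧ R (a z) = a z' ∧
        R.linearIsometryEquiv (k z) = k z'}.Infinite := fun z z' h =>
    setOf_isRotation_infinite_of_commonTangentSphere ((hk z).trans (hk z').symm) (hkk z z' h)
  refine ⟨⟨fun hs z z' h => ?_, fun hrot z z' h => ?_⟩, fun hs z z' h => hinf z z' h (hs z z' h)⟩
  · obtain ⟨R, ⟨hR, hp, hn⟩, R', ⟨hR', hp', hn'⟩, hne⟩ := (hinf z z' h (hs z z' h)).nontrivial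
    exact ⟨R, R', hR, hR', hne, hp, hn, hp', hn'⟩
  · obtain ⟨R, R', hR, hR', hne, hp, hn, hp', hn'⟩ := hrot z z' h
    exact commonTangentSphere_of_isRotation_of_ne (ha z z' h) (hkk z z' h) hR hR' hne hp hn hp' hn'
end
end

section
/- Let (p, n) and (p', n') be contact elements with a common oriented tangent sphere, say p + r • n = p' + r • n' = h for some r ∈ ℝ, with p ≠ p' and n ≠ n'. Let β = {x ∈ ℝ³ : ‖x − p‖ = ‖x − p'‖} be the bisector plane of p and p'. Then: (i) h ∈ β, and the reflection σ_β satisfies σ_β p = p' and (σ_β)_lin n = n'; (ii) for every point k ∈ β such that p', h, k are affinely independent, the composition R = σ_γ ∘ σ_β, where γ is the plane through p', h, k, is a rotation about the line through h and k with R p = p' and R_lin n = n'; (iii) R is the unique rotation about the line through h and k that maps (p, n) to (p', n'). -/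
noncomputable section
local notation "⟪" x ", " y "⟫" => @inner ℝ _ _ x y

/-- Reflection of the vector `x` in the linear plane with normal `u`. -/
def reflVec (u x : E3) : E3 := x - (2 * ⟪x, u⟫ / ⟪u, u⟫) • u

/-- Orthogonal reflection in the affine plane through `x₀` with normal `u`. -/
def reflPlane (x₀ u x : E3) : E3 := x₀ + reflVec u (x - x₀)

/-- Rotation of the vector `x` about the axis direction `e` (a unit vector)
through the angle `θ` (Rodrigues' formula). -/
def rotVec (e : E3) (θ : ℝ) (x : E3) : E3 :=
  Real.cos θ • x + Real.sin θ • cross3 e x + ((1 - Real.cos θ) * ⟪e, x⟫) • e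

/-- Rotation of the point `x` about the axis through `a` with unit direction `e`
through the angle `θ`. -/
def rotPt (a e : E3) (θ : ℝ) (x : E3) : E3 := a + rotVec e θ (x - a)

/-!
From `p + r • n = p' + r • n'` we get `h - p = r • n`, `h - p' = r • n'` and
`p' - p = r • (n - n')`, so `h` is equidistant from `p` and `p'`, and the bisector plane `β`
has normal `n - n'`: the reflection in it swaps the equally long vectors `n` and `n'`.
The plane `γ` contains `p'` and `h`, so its normal is orthogonal to `n' = (h - p') / r` and the
reflection in `γ` fixes `(p', n')`. Since `h, k ∈ β ∩ γ` and `β`, `γ` are not parallel, the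
composite of the two reflections has determinant `1` and fixes exactly the line `hk`.

For uniqueness, two rotations about the same axis that agree at a point off the axis have linear
parts agreeing on a plane `K`; their quotient `U` preserves the line `Kᗮ`, acting on it by `±1`,
and `-1` would make `U` the reflection in `K`, of determinant `-1`.
-/

open Module Submodule

section InnerProductSpace

variable {F : Type*} [NormedAddCommGroup F] [InnerProductSpace ℝ F]

theorem linearIndependent_pair_of_inner_eq_zero {a b z : F} (hb : b ≠ 0)
    (haz : ⟪a, z⟫ ≠ 0) (hbz : ⟪b, z⟫ = 0) : LinearIndependent ℝ ![a, b] := by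
  rw [LinearIndependent.pair_symm_iff]
  refine (LinearIndependent.pair_iff' hb).2 fun c hc => haz ?_
  rw [← hc, real_inner_smul_left, hbz, mul_zero]

theorem mem_perpBisector_of_norm_sub_eq {a b x : F} (h : ‖x - a‖ = ‖x - b‖) :
    x ∈ AffineSubspace.perpBisector a b := by
  rwa [AffineSubspace.mem_perpBisector_iff_dist_eq, dist_eq_norm, dist_eq_norm]

theorem inner_sub_sub_of_norm_sub_eq {a b x : F} (h : ‖x - a‖ = ‖x - b‖) :
    ⟪x - a, b - a⟫ = ‖b - a‖ ^ 2 / 2 := by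
  rw [← vsub_eq_sub, ← vsub_eq_sub, (AffineSubspace.mem_perpBisector_iff_inner_eq).1
    (mem_perpBisector_of_norm_sub_eq h), dist_comm, dist_eq_norm, vsub_eq_sub]

theorem inner_sub_midpoint_of_norm_sub_eq {a b x : F} (h : ‖x - a‖ = ‖x - b‖) :
    ⟪x - (1 / 2 : ℝ) • (a + b), b - a⟫ = 0 := by
  have := (AffineSubspace.mem_perpBisector_iff_inner_eq_zero).1 (mem_perpBisector_of_norm_sub_eq h)
  rwa [midpoint_eq_smul_add, invOf_eq_inv, ← one_div] at this

theorem finrank_orthogonal_span_pair_s13 (hF : finrank ℝ F = 3) {u w : F}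
    (huw : LinearIndependent ℝ ![u, w]) : finrank ℝ (span ℝ {u, w})ᗮ = 1 := by
  have : FiniteDimensional ℝ F := Module.finite_of_finrank_pos (by omega)
  apply finrank_add_finrank_orthogonal'
  rw [hF, ← Matrix.range_cons_cons_empty u w ![], finrank_span_eq_card huw, Fintype.card_fin]

theorem inner_eq_zero_and_inner_eq_zero_iff_mem_span_singleton (hF : finrank ℝ F = 3)
    {u w v : F} (huw : LinearIndependent ℝ ![u, w]) (hv : v ≠ 0) (hvu : ⟪v, u⟫ = 0)
    (hvw : ⟪v, w⟫ = 0) (y : F) : ⟪y, u⟫ = 0 ∧ ⟪y, w⟫ = 0 ↔ y ∈ ℝ ∙ v := by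
  have hpair : (span ℝ {u, w})ᗮ = (ℝ ∙ u)ᗮ ⊓ (ℝ ∙ w)ᗮ := by
    rw [inf_orthogonal, span_insert]
  have hmem : ∀ y, y ∈ (span ℝ {u, w})ᗮ ↔ ⟪y, u⟫ = 0 ∧ ⟪y, w⟫ = 0 := fun y => by
    rw [hpair, mem_inf, mem_orthogonal_singleton_iff_inner_left,
      mem_orthogonal_singleton_iff_inner_left]
  rw [← hmem, eq_span_singleton_of_mem_of_finrank_eq_one (finrank_orthogonal_span_pair_s13 hF huw)
    ((hmem v).2 ⟨hvu, hvw⟩) hv]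

variable [FiniteDimensional ℝ F]

theorem det_reflection_orthogonal_singleton_s13 {u : F} (hu : u ≠ 0) :
    LinearMap.det (ℝ ∙ u)ᗮ.reflection.toLinearMap = -1 := by
  rw [det_reflection, orthogonal_orthogonal, finrank_span_singleton hu, pow_one]

theorem LinearIsometryEquiv.eq_refl_of_eqOn_of_det_pos {K : Submodule ℝ F}
    (hK : finrank ℝ Kᗮ = 1) {U : F ≃ₗᵢ[ℝ] F} (hU : ∀ x ∈ K, U x = x)
    (hdet : 0 < LinearMap.det U.toLinearEquiv.toLinearMap) : U = LinearIsometryEquiv.refl ℝ F := by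
  obtain ⟨z, hzK, hz0⟩ : ∃ z ∈ Kᗮ, z ≠ 0 :=
    exists_mem_ne_zero_of_ne_bot fun h => by rw [h, finrank_bot] at hK; exact zero_ne_one hK
  have hKz : Kᗮ = ℝ ∙ z := eq_span_singleton_of_mem_of_finrank_eq_one hK hzK hz0
  have hUz : U z ∈ Kᗮ := by
    rw [mem_orthogonal]
    intro x hx
    rw [← hU x hx, U.inner_map_map]
    exact (mem_orthogonal _ _).1 hzK x hx
  obtain ⟨c, hc⟩ := mem_span_singleton.1 (hKz ▸ hUz)
  have hUK : ∀ y ∈ Kᗮ, U y = c • y := by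
    intro y hy
    obtain ⟨a, rfl⟩ := mem_span_singleton.1 (hKz ▸ hy)
    rw [map_smul, ← hc, smul_comm]
  have hc1 : |c| = 1 := by
    have := U.norm_map z
    rwa [← hc, norm_smul, Real.norm_eq_abs, mul_eq_right₀ (norm_ne_zero_iff.2 hz0)] at this
  have hcompl : Codisjoint K Kᗮ := K.isCompl_orthogonal.codisjoint
  rcases abs_eq zero_le_one |>.1 hc1 with rfl | rfl
  · exact LinearMap.ext_on_codisjoint hcompl hU fun y hy => by simp [hUK y hy]
  · have hUσ : U = K.reflection := LinearMap.ext_on_codisjoint hcompl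
      (fun y hy => by rw [hU y hy, reflection_mem_subspace_eq_self hy])
      fun y hy => by rw [hUK y hy, reflection_mem_subspace_orthogonalComplement_eq_neg hy,
        neg_one_smul]
    rw [hUσ, det_reflection, hK] at hdet
    norm_num at hdet

theorem LinearIsometryEquiv.eq_of_eqOn_of_det_pos {K : Submodule ℝ F}
    (hK : finrank ℝ Kᗮ = 1) {S T : F ≃ₗᵢ[ℝ] F} (hST : ∀ x ∈ K, S x = T x)
    (hS : 0 < LinearMap.det S.toLinearEquiv.toLinearMap)
    (hT : 0 < LinearMap.det T.toLinearEquiv.toLinearMap) : S = T := by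
  have hU : S.trans T.symm = LinearIsometryEquiv.refl ℝ F := by
    refine eq_refl_of_eqOn_of_det_pos hK (fun x hx => ?_) ?_
    · rw [trans_apply, hST x hx, symm_apply_apply]
    · have hcomp : (S.trans T.symm).toLinearEquiv.toLinearMap =
          T.toLinearEquiv.symm.toLinearMap ∘ₗ S.toLinearEquiv.toLinearMap := rfl
      rw [hcomp, LinearMap.det_comp, LinearEquiv.det_coe_symm]
      positivity
  ext x
  simpa [← T.symm_apply_eq] using congrArg (· x) hU

end InnerProductSpace

theorem AffineIndependent.linearIndependent_vsub {k V P : Type*} [Ring k] [AddCommGroup V]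
    [Module k V] [AddTorsor V P] {p₁ p₂ p₃ : P} (h : AffineIndependent k ![p₁, p₂, p₃]) :
    LinearIndependent k ![p₂ -ᵥ p₁, p₃ -ᵥ p₁] := by
  rw [affineIndependent_iff_linearIndependent_vsub k _ 0] at h
  convert h.comp _ (finSuccAboveEquiv (0 : Fin 3)).injective using 1
  ext i
  fin_cases i <;> rfl

theorem reflVec_eq_reflection (u x : E3) : reflVec u x = (ℝ ∙ u)ᗮ.reflection x := by
  rw [reflection_orthogonal_apply, reflection_singleton_apply, reflVec, real_inner_comm,
    RCLike.ofReal_real_eq_id, id, ← real_inner_self_eq_norm_sq]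
  module

theorem reflVec_smul {r : ℝ} (hr : r ≠ 0) (u : E3) : reflVec (r • u) = reflVec u := by
  ext1 x
  simp only [reflVec_eq_reflection, span_singleton_smul_eq hr.isUnit]

theorem reflVec_sub_left {a b : E3} (h : ‖a‖ = ‖b‖) : reflVec (a - b) a = b := by
  rw [reflVec_eq_reflection, reflection_sub h]

theorem reflVec_of_inner_eq_zero {u x : E3} (h : ⟪x, u⟫ = 0) : reflVec u x = x := by
  simp [reflVec, h]

theorem reflVec_eq_reflVec_iff {u w y : E3} (huw : LinearIndependent ℝ ![u, w]) :
    reflVec u y = reflVec w y ↔ ⟪y, u⟫ = 0 ∧ ⟪y, w⟫ = 0 := by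
  have hu : u ≠ 0 := huw.ne_zero 0
  have hw : w ≠ 0 := huw.ne_zero 1
  constructor
  · intro h
    have hcomb : (2 * ⟪y, u⟫ / ⟪u, u⟫) • u + (-(2 * ⟪y, w⟫ / ⟪w, w⟫)) • w = 0 := by
      rw [reflVec, reflVec, sub_right_inj] at h
      rw [h, neg_smul, add_neg_cancel]
    obtain ⟨h1, h2⟩ := LinearIndependent.pair_iff.1 huw _ _ hcomb
    constructor
    · simpa [hu] using h1
    · simpa [hw] using h2
  · rintro ⟨h1, h2⟩
    rw [reflVec_of_inner_eq_zero h1, reflVec_of_inner_eq_zero h2]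

theorem reflPlane_midpoint (a b : E3) : reflPlane ((1 / 2 : ℝ) • (a + b)) (b - a) a = b := by
  have h : a - (1 / 2 : ℝ) • (a + b) = (-(1 / 2) : ℝ) • (b - a) := by module
  rw [reflPlane, h, reflVec_eq_reflection, map_smul,
    reflection_orthogonalComplement_singleton_eq_neg]
  module

theorem reflPlane_of_inner_eq_zero {x₀ u x : E3} (h : ⟪x - x₀, u⟫ = 0) :
    reflPlane x₀ u x = x := by
  rw [reflPlane, reflVec_of_inner_eq_zero h, add_sub_cancel]

def reflPlaneEquiv (x₀ u : E3) : E3 ≃ᵃⁱ[ℝ] E3 :=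
  AffineIsometryEquiv.mk' (reflPlane x₀ u) (ℝ ∙ u)ᗮ.reflection x₀ fun x => by
    rw [reflPlane, reflPlane, sub_self, reflVec_eq_reflection, reflVec_eq_reflection, map_zero,
      add_zero, vsub_eq_sub, vadd_eq_add, add_comm]

@[simp] theorem coe_reflPlaneEquiv (x₀ u : E3) : ⇑(reflPlaneEquiv x₀ u) = reflPlane x₀ u := rfl

theorem linearIsometryEquiv_reflPlaneEquiv_trans_apply (x₁ u₁ x₂ u₂ y : E3) :
    ((reflPlaneEquiv x₁ u₁).trans (reflPlaneEquiv x₂ u₂)).linearIsometryEquiv y =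
      reflVec u₂ (reflVec u₁ y) := by
  simp only [reflVec_eq_reflection]
  rfl

theorem cross3_eq_crossProduct (a b : E3) :
    cross3 a b = WithLp.toLp 2 (crossProduct (WithLp.ofLp a) (WithLp.ofLp b)) := by
  simp [cross3, cross_apply]

theorem inner_cross3_self_left (a b : E3) : ⟪a, cross3 a b⟫ = 0 := by
  simp [cross3_eq_crossProduct, EuclideanSpace.inner_eq_star_dotProduct, dotProduct_comm,
    dot_self_cross]

theorem inner_cross3_self_right (a b : E3) : ⟪b, cross3 a b⟫ = 0 := by
  simp [cross3_eq_crossProduct, EuclideanSpace.inner_eq_star_dotProduct, dotProduct_comm,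
    dot_cross_self]

theorem cross3_ne_zero_iff {a b : E3} : cross3 a b ≠ 0 ↔ LinearIndependent ℝ ![a, b] := by
  rw [cross3_eq_crossProduct, ne_eq, WithLp.toLp_eq_zero, ← ne_eq,
    crossProduct_ne_zero_iff_linearIndependent,
    ← LinearMap.linearIndependent_iff _ (WithLp.linearEquiv 2 ℝ (Fin 3 → ℝ)).ker]
  congr!
  ext i : 1
  fin_cases i <;> rfl

theorem isRotationAbout_reflPlaneEquiv_trans {x₁ u₁ x₂ u₂ h k : E3}
    (hu : LinearIndependent ℝ ![u₁, u₂]) (hhk : h ≠ k) (hh₁ : ⟪h - x₁, u₁⟫ = 0)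
    (hk₁ : ⟪k - x₁, u₁⟫ = 0) (hh₂ : ⟪h - x₂, u₂⟫ = 0) (hk₂ : ⟪k - x₂, u₂⟫ = 0) :
    IsRotationAbout ((reflPlaneEquiv x₁ u₁).trans (reflPlaneEquiv x₂ u₂)) h (k - h) := by
  set R := (reflPlaneEquiv x₁ u₁).trans (reflPlaneEquiv x₂ u₂)
  have hu₁ : u₁ ≠ 0 := hu.ne_zero 0
  have hu₂ : u₂ ≠ 0 := hu.ne_zero 1
  have hv : k - h ≠ 0 := sub_ne_zero.2 hhk.symm
  have hv₁ : ⟪k - h, u₁⟫ = 0 := by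
    rw [← sub_sub_sub_cancel_right k h x₁, inner_sub_left, hk₁, hh₁, sub_zero]
  have hv₂ : ⟪k - h, u₂⟫ = 0 := by
    rw [← sub_sub_sub_cancel_right k h x₂, inner_sub_left, hk₂, hh₂, sub_zero]
  have hRh : R h = h := by
    simp [R, reflPlane_of_inner_eq_zero hh₁, reflPlane_of_inner_eq_zero hh₂]
  have hfix : ∀ x, R x = x ↔ x ∈ line h (k - h) := by
    intro x
    have hlin : R.linearIsometryEquiv (x - h) = R x - h := by
      rw [← vsub_eq_sub, R.map_vsub, hRh]
      rfl
    rw [← sub_left_inj (a := h), ← hlin, linearIsometryEquiv_reflPlaneEquiv_trans_apply,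
      reflVec_eq_reflection u₂, (reflection_involutive _).eq_iff, ← reflVec_eq_reflection,
      reflVec_eq_reflVec_iff hu, inner_eq_zero_and_inner_eq_zero_iff_mem_span_singleton
        (finrank_euclideanSpace_fin) hu hv hv₁ hv₂, mem_span_singleton, line]
    simp only [Set.mem_ofPred_eq, eq_sub_iff_add_eq', eq_comm]
  refine ⟨hv, ?_, fun hR => ?_, hfix⟩
  · show 0 < LinearMap.det ((ℝ ∙ u₂)ᗮ.reflection.toLinearMap ∘ₗ (ℝ ∙ u₁)ᗮ.reflection.toLinearMap)
    rw [LinearMap.det_comp, det_reflection_orthogonal_singleton_s13 hu₂,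
      det_reflection_orthogonal_singleton_s13 hu₁]
    norm_num
  · obtain ⟨t, ht⟩ := (hfix (h + u₁)).1 (by rw [hR]; rfl)
    have := congrArg (⟪·, u₁⟫) (add_left_cancel ht)
    simp only [real_inner_smul_left, hv₁, mul_zero, inner_self_eq_zero] at this
    exact hu₁ this

theorem IsRotationAbout.eq_of_apply_eq {R R' : E3 ≃ᵃⁱ[ℝ] E3} {a v x : E3}
    (hR : IsRotationAbout R a v) (hR' : IsRotationAbout R' a v) (hx : R x ≠ x)
    (hRx : R x = R' x) : R = R' := by
  have hxv : LinearIndependent ℝ ![v, x - a] :=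
    (LinearIndependent.pair_iff' hR.1).2 fun t ht => hx ((hR.2.2.2 x).2 ⟨t, by rw [ht]; abel⟩)
  have hlin : ∀ {Q : E3 ≃ᵃⁱ[ℝ] E3}, IsRotationAbout Q a v →
      ∀ y, Q.linearIsometryEquiv (y - a) = Q y - a := by
    intro Q hQ y
    rw [← vsub_eq_sub, Q.map_vsub, (hQ.2.2.2 a).2 ⟨0, by simp⟩]
    rfl
  have hdir : ∀ {Q : E3 ≃ᵃⁱ[ℝ] E3}, IsRotationAbout Q a v → Q.linearIsometryEquiv v = v := by
    intro Q hQ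
    simpa [(hQ.2.2.2 (a + v)).2 ⟨1, by simp⟩] using hlin hQ (a + v)
  have hL : R.linearIsometryEquiv = R'.linearIsometryEquiv := by
    refine LinearIsometryEquiv.eq_of_eqOn_of_det_pos
      (finrank_orthogonal_span_pair_s13 finrank_euclideanSpace_fin hxv) (fun y hy => ?_) hR.2.1 hR'.2.1
    obtain ⟨s, t, rfl⟩ := mem_span_pair.1 hy
    simp only [map_add, map_smul, hlin hR, hlin hR', hRx, hdir hR, hdir hR']
  ext1 y
  rw [← sub_left_inj (a := a), ← hlin hR, ← hlin hR', hL]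

theorem isRotationAbout_reflPlaneEquiv_bisector_trans {p p' h k : E3} (hp : p ≠ p')
    (hh : ‖h - p‖ = ‖h - p'‖) (hk : ‖k - p‖ = ‖k - p'‖) (hind : AffineIndependent ℝ ![p', h, k]) :
    IsRotationAbout ((reflPlaneEquiv ((1 / 2 : ℝ) • (p + p')) (p' - p)).trans
      (reflPlaneEquiv p' (cross3 (h - p') (k - p')))) h (k - h) := by
  have hw : cross3 (h - p') (k - p') ≠ 0 := cross3_ne_zero_iff.2 hind.linearIndependent_vsub
  have hhk : h ≠ k := by simpa using hind.injective.ne (show (1 : Fin 3) ≠ 2 by decide)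
  have hp'u : ⟪p' - p, h - p'⟫ ≠ 0 := by
    rw [← neg_sub, inner_neg_left, real_inner_comm, inner_sub_sub_of_norm_sub_eq hh.symm]
    simpa [sub_eq_zero] using hp
  exact isRotationAbout_reflPlaneEquiv_trans
    (linearIndependent_pair_of_inner_eq_zero hw hp'u
      (by rw [real_inner_comm]; exact inner_cross3_self_left _ _))
    hhk (inner_sub_midpoint_of_norm_sub_eq hh) (inner_sub_midpoint_of_norm_sub_eq hk)
    (inner_cross3_self_left _ _) (inner_cross3_self_right _ _)

theorem reflection_rotation_lemma_general
    (p n p' n' : E3) (hn : ‖n‖ = 1) (hn' : ‖n'‖ = 1)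
    (r : ℝ) (h : E3) (hh : h = p + r • n)
    (hcts : p + r • n = p' + r • n')
    (hp : p ≠ p') :
    -- (i)
    (‖h - p‖ = ‖h - p'‖ ∧
      reflPlane ((1 / 2 : ℝ) • (p + p')) (p' - p) p = p' ∧
      reflVec (p' - p) n = n') ∧
    -- (ii) and (iii)
    (∀ k : E3, ‖k - p‖ = ‖k - p'‖ → AffineIndependent ℝ ![p', h, k] →
      ∃ R : E3 ≃ᵃⁱ[ℝ] E3,
        (∀ x : E3, R x = reflPlane p' (cross3 (h - p') (k - p'))
            (reflPlane ((1 / 2 : ℝ) • (p + p')) (p' - p) x)) ∧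
        IsRotationAbout R h (k - h) ∧
        R p = p' ∧ R.linearIsometryEquiv n = n' ∧
        (∀ R' : E3 ≃ᵃⁱ[ℝ] E3, IsRotationAbout R' h (k - h) →
          R' p = p' → R'.linearIsometryEquiv n = n' → R' = R)) := by
  have hr : r ≠ 0 := by
    rintro rfl
    exact hp (by simpa using hcts)
  have hhp : h - p = r • n := by rw [hh]; abel
  have hhp' : h - p' = r • n' := by rw [hh, hcts]; abel
  have hu : p' - p = r • (n - n') := by rw [smul_sub, ← hhp, ← hhp']; abel
  have hβ : ‖h - p‖ = ‖h - p'‖ := by rw [hhp, hhp', norm_smul, norm_smul, hn, hn']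
  have hσn : reflVec (p' - p) n = n' := by
    rw [hu, reflVec_smul hr, reflVec_sub_left (hn.trans hn'.symm)]
  refine ⟨⟨hβ, reflPlane_midpoint p p', hσn⟩, fun k hk hind => ?_⟩
  have hhw := inner_cross3_self_left (h - p') (k - p')
  set w := cross3 (h - p') (k - p')
  have hn'w : ⟪n', w⟫ = 0 := by
    rwa [hhp', real_inner_smul_left, mul_eq_zero, or_iff_right hr] at hhw
  set R := (reflPlaneEquiv ((1 / 2 : ℝ) • (p + p')) (p' - p)).trans (reflPlaneEquiv p' w)
  have hRp : R p = p' := by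
    rw [AffineIsometryEquiv.coe_trans, Function.comp_apply, coe_reflPlaneEquiv, coe_reflPlaneEquiv,
      reflPlane_midpoint, reflPlane_of_inner_eq_zero (by rw [sub_self, inner_zero_left])]
  have hrot : IsRotationAbout R h (k - h) :=
    isRotationAbout_reflPlaneEquiv_bisector_trans hp hβ hk hind
  have hRn : R.linearIsometryEquiv n = n' := by
    rw [linearIsometryEquiv_reflPlaneEquiv_trans_apply, hσn, reflVec_of_inner_eq_zero hn'w]
  exact ⟨R, fun x => rfl, hrot, hRp, hRn, fun R' hR' hR'p _ =>
    hR'.eq_of_apply_eq hrot (by rw [hR'p]; exact hp.symm) (hR'p.trans hRp.symm)⟩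

/-- **Lemma.** For two contact elements `(p, n)`, `(p', n')` with a common oriented
tangent sphere (touching point `h`): (i) the reflection in the bisector plane `β` of
`p` and `p'` maps `(p, n)` to `(p', n')` and fixes `h`; (ii) for every `k ∈ β` with
`p'`, `h`, `k` affinely independent, the composition of the reflections in `β` and in
the plane `γ` through `p'`, `h`, `k` is a rotation about the line through `h` and `k`
mapping `(p, n)` to `(p', n')`; (iii) it is the unique such rotation. -/
theorem reflection_rotation_lemma
    (p n p' n' : E3) (hn : ‖n‖ = 1) (hn' : ‖n'‖ = 1)
    (r : ℝ) (h : E3) (hh : h = p + r • n)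
    (hcts : p + r • n = p' + r • n')
    (hp : p ≠ p') (hne : n ≠ n') :
    -- (i)
    (‖h - p‖ = ‖h - p'‖ ∧
      reflPlane ((1 / 2 : ℝ) • (p + p')) (p' - p) p = p' ∧
      reflVec (p' - p) n = n') ∧
    -- (ii) and (iii)
    (∀ k : E3, ‖k - p‖ = ‖k - p'‖ → AffineIndependent ℝ ![p', h, k] →
      ∃ R : E3 ≃ᵃⁱ[ℝ] E3,
        (∀ x : E3, R x = reflPlane p' (cross3 (h - p') (k - p'))
            (reflPlane ((1 / 2 : ℝ) • (p + p')) (p' - p) x)) ∧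
        IsRotationAbout R h (k - h) ∧
        R p = p' ∧ R.linearIsometryEquiv n = n' ∧
        (∀ R' : E3 ≃ᵃⁱ[ℝ] E3, IsRotationAbout R' h (k - h) →
          R' p = p' → R'.linearIsometryEquiv n = n' → R' = R)) :=
  reflection_rotation_lemma_general p n p' n' hn hn' r h hh hcts hp
end
end
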